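/- arXiv:1909.08568 — 2 statements merged into one kernel-verified Lean document; each statement's English description precedes it below -/
import Mathlib

section
/- Let p ≥ 5 be prime, and let vertices of M₃(p) be classes [a:c] of nonzero pairs in (Z/p)² modulo ±1, with adjacency [a:c] ~ [b:d] iff ad - bc = ±1 in Z/p. Then two distinct vertices [a:c], [b:d] with Δ = ad - bc satisfy: graph distance 1 iff Δ = ±1; graph distance 2 iff Δ ∉ {0, 1, -1}; and graph distance 3 iff Δ = 0. -/
/-- Nonzero pairs over `ZMod p`. -/
def FPair (p : ℕ) : Type := {v : ZMod p × ZMod p // v ≠ 0}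

/-- The equivalence identifying `v` with `-v`. -/
def fareySetoid (p : ℕ) : Setoid (FPair p) where
  r v w := w.1 = v.1 ∨ w.1 = -v.1
  iseqv := by
    refine ⟨fun v => Or.inl rfl, ?_, ?_⟩
    · rintro v w (h | h)
      · exact Or.inl h.symm
      · exact Or.inr (by rw [h, neg_neg])
    · rintro u v w (h1 | h1) (h2 | h2)
      · exact Or.inl (h2.trans h1)
      · exact Or.inr (by rw [h2, h1])
      · exact Or.inr (h2.trans (by rw [h1]))
      · exact Or.inl (by rw [h2, h1, neg_neg])

/-- Vertices of the Farey map `M₃(p)`: nonzero pairs mod `±1`. -/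
def FV (p : ℕ) : Type := Quotient (fareySetoid p)

def det₂ {p : ℕ} (v w : ZMod p × ZMod p) : ZMod p := v.1 * w.2 - w.1 * v.2

/-- The Farey graph `M₃(p)`: `[a:c] ~ [b:d]` iff `a*d - b*c = ±1`. -/
def FGraph (p : ℕ) : SimpleGraph (FV p) where
  Adj x y := x ≠ y ∧ ∃ v w : FPair p,
      x = Quotient.mk (fareySetoid p) v ∧ y = Quotient.mk (fareySetoid p) w ∧
      (det₂ v.1 w.1 = 1 ∨ det₂ v.1 w.1 = -1)
  symm := ⟨by
    rintro x y ⟨hxy, v, w, hx, hy, h⟩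
    refine ⟨hxy.symm, w, v, hy, hx, ?_⟩
    have : det₂ w.1 v.1 = -det₂ v.1 w.1 := by unfold det₂; ring
    rcases h with h | h
    · exact Or.inr (by rw [this, h])
    · exact Or.inl (by rw [this, h, neg_neg])⟩
  loopless := ⟨fun x h => h.1 rfl⟩

/-- `[a : c]` as a vertex of `M₃(p)` (with a junk default for the zero pair). -/
noncomputable def fvq (p : ℕ) [Fact p.Prime] (a c : ZMod p) : FV p :=
  if h : ((a, c) : ZMod p × ZMod p) ≠ 0 then Quotient.mk (fareySetoid p) ⟨(a, c), h⟩
  else Quotient.mk (fareySetoid p) ⟨(1, 0), by simp [Prod.ext_iff]⟩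

/-! If `Δ = det₂ v w ≠ 0`, then `Δ⁻¹ • (v + w)` has determinant `1` with both `v` and `w`, so it is
a common neighbour of `[v]` and `[w]`. Conversely, Cramer's rule
`det₂ v w • u = det₂ u w • v + det₂ v u • w` shows that if `Δ = 0`, a common neighbour `[u]` forces
`w = ±v`. Hence distinct vertices with `Δ = 0` are at distance at least `3`; they are joined by a
path of length `3` through any neighbour `[u]` of `[v]`, which shares a neighbour with `[w]`. -/

section Det

variable {p : ℕ}

lemma det₂_neg_left (v w : ZMod p × ZMod p) : det₂ (-v) w = -det₂ v w := by
  simp only [det₂, Prod.fst_neg, Prod.snd_neg]; ring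

lemma det₂_neg_right (v w : ZMod p × ZMod p) : det₂ v (-w) = -det₂ v w := by
  simp only [det₂, Prod.fst_neg, Prod.snd_neg]; ring

lemma det₂_swap (v w : ZMod p × ZMod p) : det₂ w v = -det₂ v w := by
  simp only [det₂]; ring

@[simp]
lemma det₂_self (v : ZMod p × ZMod p) : det₂ v v = 0 := by
  simp only [det₂]; ring

@[simp]
lemma det₂_zero_right (v : ZMod p × ZMod p) : det₂ v 0 = 0 := by
  simp [det₂]

lemma det₂_smul_add_right (c : ZMod p) (v w : ZMod p × ZMod p) :
    det₂ v (c • (v + w)) = c * det₂ v w := by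
  simp only [det₂, Prod.smul_fst, Prod.smul_snd, Prod.fst_add, Prod.snd_add, smul_eq_mul]; ring

lemma det₂_smul_add_left (c : ZMod p) (v w : ZMod p × ZMod p) :
    det₂ (c • (v + w)) w = c * det₂ v w := by
  simp only [det₂, Prod.smul_fst, Prod.smul_snd, Prod.fst_add, Prod.snd_add, smul_eq_mul]; ring

lemma det₂_smul_eq (u v w : ZMod p × ZMod p) :
    det₂ v w • u = det₂ u w • v + det₂ v u • w := by
  ext <;> simp only [det₂, Prod.smul_fst, Prod.smul_snd, Prod.fst_add, Prod.snd_add,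
    smul_eq_mul] <;> ring

end Det

namespace FGraph

variable {p : ℕ}

local notation "⟦" v "⟧ₚ" => Quotient.mk (fareySetoid _) v

lemma exists_det₂_eq_one [Fact p.Prime] {v : ZMod p × ZMod p} (hv : v ≠ 0) :
    ∃ u : FPair p, det₂ v u.1 = 1 := by
  suffices ∃ u, det₂ v u = 1 by
    obtain ⟨u, hu⟩ := this
    exact ⟨⟨u, by rintro rfl; simp at hu⟩, hu⟩
  obtain ⟨a, c⟩ := v
  by_cases ha : a = 0
  · have hc : c ≠ 0 := by rintro rfl; exact hv (by rw [ha]; rfl)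
    exact ⟨(-c⁻¹, 0), by simp [det₂, hc]⟩
  · exact ⟨(0, a⁻¹), by simp [det₂, ha]⟩

lemma mk_eq_mk_iff {v w : FPair p} : ⟦v⟧ₚ = ⟦w⟧ₚ ↔ w.1 = v.1 ∨ w.1 = -v.1 :=
  Quotient.eq

lemma mk_ne_mk_of_det₂_ne_zero {v w : FPair p} (h : det₂ v.1 w.1 ≠ 0) : ⟦v⟧ₚ ≠ ⟦w⟧ₚ := by
  intro hvw
  rcases mk_eq_mk_iff.1 hvw with hw | hw <;> simp [hw, det₂_neg_right] at h

lemma adj_mk_mk_iff [Nontrivial (ZMod p)] {v w : FPair p} :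
    (FGraph p).Adj ⟦v⟧ₚ ⟦w⟧ₚ ↔ det₂ v.1 w.1 = 1 ∨ det₂ v.1 w.1 = -1 := by
  refine ⟨?_, fun h => ⟨mk_ne_mk_of_det₂_ne_zero ?_, v, w, rfl, rfl, h⟩⟩
  · rintro ⟨-, v', w', hv, hw, h⟩
    rcases mk_eq_mk_iff.1 hv with hv | hv <;> rcases mk_eq_mk_iff.1 hw with hw | hw <;>
      simp_all [det₂_neg_left, det₂_neg_right, neg_eq_iff_eq_neg, or_comm]
  · rcases h with h | h <;> simp [h]

lemma mk_eq_mk_of_adj_of_adj_of_det₂_eq_zero [Nontrivial (ZMod p)] {u v w : FPair p}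
    (h : det₂ v.1 w.1 = 0) (hvu : (FGraph p).Adj ⟦v⟧ₚ ⟦u⟧ₚ) (hwu : (FGraph p).Adj ⟦w⟧ₚ ⟦u⟧ₚ) :
    ⟦v⟧ₚ = ⟦w⟧ₚ := by
  have hcramer := det₂_smul_eq u.1 v.1 w.1
  rw [h, zero_smul] at hcramer
  rw [adj_mk_mk_iff] at hvu hwu
  rw [det₂_swap, neg_eq_iff_eq_neg, neg_eq_iff_eq_neg] at hwu
  refine mk_eq_mk_iff.2 ?_
  rcases hvu with hvu | hvu <;> rcases hwu with hwu | hwu <;>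
    simp only [hvu, hwu, one_smul, neg_smul, neg_neg] at hcramer
  all_goals first
    | exact .inl (by linear_combination -hcramer) | exact .inl (by linear_combination hcramer)
    | exact .inr (by linear_combination -hcramer) | exact .inr (by linear_combination hcramer)

lemma commonNeighbors_mk_mk_nonempty_iff [Fact p.Prime] {v w : FPair p} (hne : ⟦v⟧ₚ ≠ ⟦w⟧ₚ) :
    ((FGraph p).commonNeighbors ⟦v⟧ₚ ⟦w⟧ₚ).Nonempty ↔ det₂ v.1 w.1 ≠ 0 := by
  refine ⟨fun ⟨x, hx⟩ h0 => ?_, fun h0 => ?_⟩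
  · obtain ⟨u, rfl⟩ := Quotient.exists_rep x
    obtain ⟨hvu, hwu⟩ := ((FGraph p).mem_commonNeighbors).1 hx
    exact hne (mk_eq_mk_of_adj_of_adj_of_det₂_eq_zero h0 hvu hwu)
  · set u := (det₂ v.1 w.1)⁻¹ • (v.1 + w.1)
    have hvu : det₂ v.1 u = 1 := by rw [det₂_smul_add_right, inv_mul_cancel₀ h0]
    have huw : det₂ u w.1 = 1 := by rw [det₂_smul_add_left, inv_mul_cancel₀ h0]
    have hu : u ≠ 0 := by rintro hu; simp [hu] at hvu
    refine ⟨⟦⟨u, hu⟩⟧ₚ, ((FGraph p).mem_commonNeighbors).2 ⟨adj_mk_mk_iff.2 (.inl hvu),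
      adj_mk_mk_iff.2 (.inr ?_)⟩⟩
    rw [det₂_swap]; exact congrArg _ huw

open SimpleGraph

lemma dist_mk_mk_eq_two [Fact p.Prime] {v w : FPair p} (h0 : det₂ v.1 w.1 ≠ 0)
    (h1 : ¬(det₂ v.1 w.1 = 1 ∨ det₂ v.1 w.1 = -1)) : (FGraph p).dist ⟦v⟧ₚ ⟦w⟧ₚ = 2 := by
  have hne := mk_ne_mk_of_det₂_ne_zero h0
  obtain ⟨u, hu⟩ := (commonNeighbors_mk_mk_nonempty_iff hne).2 h0
  obtain ⟨hvu, hwu⟩ := ((FGraph p).mem_commonNeighbors).1 hu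
  have hedist : (FGraph p).edist ⟦v⟧ₚ ⟦w⟧ₚ = 2 :=
    edist_eq_two_iff.2 ⟨hne, mt adj_mk_mk_iff.1 h1, u, hu⟩
  exact_mod_cast (hvu.reachable.trans hwu.reachable.symm).coe_dist_eq_edist.trans hedist

lemma dist_mk_mk_eq_three [Fact p.Prime] {v w : FPair p} (hne : ⟦v⟧ₚ ≠ ⟦w⟧ₚ)
    (h0 : det₂ v.1 w.1 = 0) : (FGraph p).dist ⟦v⟧ₚ ⟦w⟧ₚ = 3 := by
  obtain ⟨u, hdet⟩ := exists_det₂_eq_one v.2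
  -- Cramer's rule gives `w = det₂ w u • v`, so `w ≠ 0` forces `det₂ u w ≠ 0`.
  have huw : det₂ u.1 w.1 ≠ 0 := by
    intro huw
    have hcramer := det₂_smul_eq w.1 v.1 u.1
    rw [hdet, h0, det₂_swap, huw, neg_zero, zero_smul, zero_smul, add_zero, one_smul] at hcramer
    exact w.2 hcramer
  obtain ⟨x, hx⟩ := (commonNeighbors_mk_mk_nonempty_iff (mk_ne_mk_of_det₂_ne_zero huw)).2 huw
  obtain ⟨hux, hwx⟩ := ((FGraph p).mem_commonNeighbors).1 hx
  have hvu : (FGraph p).Adj ⟦v⟧ₚ ⟦u⟧ₚ := adj_mk_mk_iff.2 (.inl hdet)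
  let walk : (FGraph p).Walk ⟦v⟧ₚ ⟦w⟧ₚ := .cons hvu (.cons hux (.cons hwx.symm .nil))
  have hnadj : ¬(FGraph p).Adj ⟦v⟧ₚ ⟦w⟧ₚ := by simp [adj_mk_mk_iff, h0]
  have hcommon : (FGraph p).commonNeighbors ⟦v⟧ₚ ⟦w⟧ₚ = ∅ :=
    Set.not_nonempty_iff_eq_empty.1 fun h => (commonNeighbors_mk_mk_nonempty_iff hne).1 h h0
  have hlt : (2 : ℕ∞) < (FGraph p).edist ⟦v⟧ₚ ⟦w⟧ₚ := two_lt_edist_iff.2 ⟨hne, hnadj, hcommon⟩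
  rw [← walk.reachable.coe_dist_eq_edist] at hlt
  have hle : (FGraph p).dist ⟦v⟧ₚ ⟦w⟧ₚ ≤ 3 := dist_le walk
  norm_cast at hlt
  omega

end FGraph

theorem farey_distance_general (p : ℕ) [Fact p.Prime] (v w : FPair p)
    (hne : Quotient.mk (fareySetoid p) v ≠ Quotient.mk (fareySetoid p) w) :
    ((FGraph p).dist (Quotient.mk (fareySetoid p) v) (Quotient.mk (fareySetoid p) w) = 1 ↔
      (det₂ v.1 w.1 = 1 ∨ det₂ v.1 w.1 = -1)) ∧
    ((FGraph p).dist (Quotient.mk (fareySetoid p) v) (Quotient.mk (fareySetoid p) w) = 2 ↔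
      ¬(det₂ v.1 w.1 = 0 ∨ det₂ v.1 w.1 = 1 ∨ det₂ v.1 w.1 = -1)) ∧
    ((FGraph p).dist (Quotient.mk (fareySetoid p) v) (Quotient.mk (fareySetoid p) w) = 3 ↔
      det₂ v.1 w.1 = 0) := by
  by_cases h0 : det₂ v.1 w.1 = 0
  · simp [FGraph.dist_mk_mk_eq_three hne h0, h0]
  by_cases h1 : det₂ v.1 w.1 = 1 ∨ det₂ v.1 w.1 = -1
  · simp [SimpleGraph.dist_eq_one_iff_adj.2 (FGraph.adj_mk_mk_iff.2 h1), h0, h1]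
  · simp [FGraph.dist_mk_mk_eq_two h0 h1, h0, h1]

/-- Distance theorem for `M₃(p)`, `p ≥ 5` prime: for distinct vertices `[a:c]`, `[b:d]`
with `Δ = a*d - b*c`, the graph distance is `1` iff `Δ = ±1`, `2` iff `Δ ∉ {0, ±1}`,
and `3` iff `Δ = 0`. -/
theorem farey_distance (p : ℕ) [Fact p.Prime] (hp : 5 ≤ p) (v w : FPair p)
    (hne : Quotient.mk (fareySetoid p) v ≠ Quotient.mk (fareySetoid p) w) :
    ((FGraph p).dist (Quotient.mk (fareySetoid p) v) (Quotient.mk (fareySetoid p) w) = 1 ↔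
      (det₂ v.1 w.1 = 1 ∨ det₂ v.1 w.1 = -1)) ∧
    ((FGraph p).dist (Quotient.mk (fareySetoid p) v) (Quotient.mk (fareySetoid p) w) = 2 ↔
      ¬(det₂ v.1 w.1 = 0 ∨ det₂ v.1 w.1 = 1 ∨ det₂ v.1 w.1 = -1)) ∧
    ((FGraph p).dist (Quotient.mk (fareySetoid p) v) (Quotient.mk (fareySetoid p) w) = 3 ↔
      det₂ v.1 w.1 = 0) :=
  farey_distance_general p v w hne
end

section
/- For prime p ≥ 5, the concatenation S₂(p) = S (S+1) (S+2) ⋯ (S+p-1), where S = S(p) is the path 1/((p-1)/2), …, 1/2, 2/3, …, ((p-3)/2)/((p-1)/2), is a closed circuit in M₃(p) of length p(p-4), all of whose vertices are at graph distance 2 from [1:0]. -/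
/-- The translation `z ↦ z + k` on homogeneous coordinates: `(a, c) ↦ (a + k·c, c)`. -/
def trPair {p : ℕ} (k : ZMod p) (v : FPair p) : FPair p :=
  ⟨(v.1.1 + k * v.1.2, v.1.2), by
    obtain ⟨⟨a, c⟩, hv⟩ := v
    intro h
    apply hv
    rw [Prod.ext_iff] at h ⊢
    simp only [Prod.fst_zero, Prod.snd_zero] at h ⊢
    obtain ⟨h1, h2⟩ := h
    subst h2
    rw [mul_zero, add_zero] at h1
    exact ⟨h1, rfl⟩⟩

/-- The translation `z ↦ z + k` on vertices of `M₃(p)`. -/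
def trv {p : ℕ} (k : ZMod p) : FV p → FV p :=
  Quotient.map (trPair k) (by
    rintro v w (h | h)
    · left
      show (w.1.1 + k * w.1.2, w.1.2) = (v.1.1 + k * v.1.2, v.1.2)
      rw [h]
    · right
      show (w.1.1 + k * w.1.2, w.1.2) = -(v.1.1 + k * v.1.2, v.1.2)
      rw [h]
      simp [Prod.ext_iff]
      ring)

/-- The path `S(p)`: `1/((p-1)/2), …, 1/3, 1/2, 2/3, …, ((p-3)/2)/((p-1)/2)`,
indexed by `i = 0, …, p-5`. -/
noncomputable def Sfun (p : ℕ) [Fact p.Prime] (i : ℕ) : FV p :=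
  if i + 2 ≤ (p - 1) / 2 then fvq p 1 ((((p - 1) / 2 - i : ℕ)) : ZMod p)
  else fvq p (((i - ((p - 1) / 2 - 2) + 1 : ℕ) : ZMod p))
    (((i - ((p - 1) / 2 - 2) + 2 : ℕ) : ZMod p))

/-- The cyclic sequence `S₂(p) = S (S+1) (S+2) ⋯ (S+p-1)` of period `p(p-4)`. -/
noncomputable def S2fun (p : ℕ) [Fact p.Prime] (j : ℕ) : FV p :=
  trv ((((j % (p * (p - 4))) / (p - 4) : ℕ)) : ZMod p)
    (Sfun p ((j % (p * (p - 4))) % (p - 4)))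

/-! Translation `[a:c] ↦ [a + kc : c]` preserves `ad - bc`, so it is an automorphism of
`M₃(p)`. Consecutive vertices of `S` are Farey neighbours, and the last vertex `(m-1)/m` of
`S + k` is adjacent to the first vertex `1/m` of `S + (k+1)`: since `m = (p-1)/2 = -1/2` in
`ZMod p`, their determinant is `-2m = 1`. Every vertex `[a:c]` of `S₂` has `2 ≤ c ≤ (p-1)/2`,
so `c ≠ 0, ±1`: it is not adjacent to `[1:0]`, but both are adjacent to `[(a+1)/c : 1]`. -/

section FareyGraph

variable {p : ℕ}

lemma det₂_of_rel {v v' w w' : FPair p} (hv : (fareySetoid p).r v v')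
    (hw : (fareySetoid p).r w w') :
    det₂ v'.1 w'.1 = det₂ v.1 w.1 ∨ det₂ v'.1 w'.1 = -det₂ v.1 w.1 := by
  rcases hv with hv | hv <;> rcases hw with hw | hw <;> [left; right; right; left] <;>
    simp only [det₂, hv, hw, Prod.fst_neg, Prod.snd_neg] <;> ring

lemma det₂_trPair (k : ZMod p) (v w : FPair p) :
    det₂ (trPair k v).1 (trPair k w).1 = det₂ v.1 w.1 := by
  simp only [det₂, trPair]
  ring

variable [Fact p.Prime]

lemma FGraph.adj_mk_iff (v w : FPair p) :
    (FGraph p).Adj (Quotient.mk _ v) (Quotient.mk _ w) ↔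
      det₂ v.1 w.1 = 1 ∨ det₂ v.1 w.1 = -1 := by
  constructor
  · rintro ⟨-, v', w', hv, hw, h⟩
    rcases det₂_of_rel (Quotient.exact hv) (Quotient.exact hw) with e | e <;>
      rw [e] at h <;> rcases h with h | h
    exacts [Or.inl h, Or.inr h, Or.inr (neg_eq_iff_eq_neg.mp h), Or.inl (neg_inj.mp h)]
  · intro h
    refine ⟨fun he => ?_, v, w, rfl, rfl, h⟩
    have hvw : det₂ v.1 w.1 = 0 := by
      rcases Quotient.exact he with e | e <;>
        simp only [det₂, e, Prod.fst_neg, Prod.snd_neg] <;> ring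
    rcases h with h | h <;> rw [hvw] at h <;> simp at h

lemma FGraph.adj_trv (k : ZMod p) {x y : FV p} (h : (FGraph p).Adj x y) :
    (FGraph p).Adj (trv k x) (trv k y) := by
  induction x using Quotient.inductionOn
  induction y using Quotient.inductionOn
  rw [FGraph.adj_mk_iff] at h
  exact (FGraph.adj_mk_iff _ _).mpr (by rwa [det₂_trPair])

lemma fvq_eq_mk {a c : ZMod p} (h : ((a, c) : ZMod p × ZMod p) ≠ 0) :
    fvq p a c = Quotient.mk (fareySetoid p) ⟨(a, c), h⟩ :=
  dif_pos h

lemma FGraph.adj_fvq {a c b d : ZMod p} (h : a * d - b * c = 1 ∨ a * d - b * c = -1) :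
    (FGraph p).Adj (fvq p a c) (fvq p b d) := by
  have h0 : a * d - b * c ≠ 0 := by rcases h with h | h <;> rw [h] <;> simp
  have hac : ((a, c) : ZMod p × ZMod p) ≠ 0 := fun hz =>
    h0 (by obtain ⟨rfl, rfl⟩ := Prod.mk_eq_zero.mp hz; ring)
  have hbd : ((b, d) : ZMod p × ZMod p) ≠ 0 := fun hz =>
    h0 (by obtain ⟨rfl, rfl⟩ := Prod.mk_eq_zero.mp hz; ring)
  rw [fvq_eq_mk hac, fvq_eq_mk hbd]
  exact (FGraph.adj_mk_iff _ _).mpr h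

lemma trv_fvq (k : ZMod p) {a c : ZMod p} (hc : c ≠ 0) :
    trv k (fvq p a c) = fvq p (a + k * c) c := by
  have hc' {x : ZMod p} : ((x, c) : ZMod p × ZMod p) ≠ 0 := fun h => hc (congrArg Prod.snd h)
  rw [fvq_eq_mk hc', fvq_eq_mk hc']
  rfl

lemma FGraph.dist_fvq_one_zero {a c : ZMod p} (h0 : c ≠ 0) (h1 : c ≠ 1) (h2 : c ≠ -1) :
    (FGraph p).dist (fvq p 1 0) (fvq p a c) = 2 := by
  have h10 : ((1, 0) : ZMod p × ZMod p) ≠ 0 := fun h => one_ne_zero (congrArg Prod.fst h)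
  have hac : ((a, c) : ZMod p × ZMod p) ≠ 0 := fun h => h0 (congrArg Prod.snd h)
  have hne : fvq p 1 0 ≠ fvq p a c := by
    rw [fvq_eq_mk h10, fvq_eq_mk hac]
    intro he
    rcases Quotient.exact he with e | e <;> simp [Prod.ext_iff, h0] at e
  have not_adj : ¬ (FGraph p).Adj (fvq p 1 0) (fvq p a c) := by
    rw [fvq_eq_mk h10, fvq_eq_mk hac]
    intro h
    rcases (FGraph.adj_mk_iff _ _).mp h with h | h
    exacts [h1 (by simpa [det₂] using h), h2 (by simpa [det₂] using h)]
  have adj₁ : (FGraph p).Adj (fvq p 1 0) (fvq p ((a + 1) * c⁻¹) 1) :=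
    FGraph.adj_fvq (Or.inl (by ring))
  have adj₂ : (FGraph p).Adj (fvq p a c) (fvq p ((a + 1) * c⁻¹) 1) :=
    FGraph.adj_fvq (Or.inr (by field_simp; ring))
  have hedist : (FGraph p).edist (fvq p 1 0) (fvq p a c) = 2 :=
    SimpleGraph.edist_eq_two_iff.mpr ⟨hne, not_adj, _, adj₁, adj₂⟩
  rw [SimpleGraph.dist, hedist]
  rfl

end FareyGraph

lemma ZMod.natCast_ne_zero_one_neg_one {n c : ℕ} (h2 : 2 ≤ c) (hc : c + 2 ≤ n) :
    (c : ZMod n) ≠ 0 ∧ (c : ZMod n) ≠ 1 ∧ (c : ZMod n) ≠ -1 := by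
  have key (x : ℕ) (hx0 : 0 < x) (hxn : x < n) : (x : ZMod n) ≠ 0 := fun h =>
    hx0.ne' (Nat.eq_zero_of_dvd_of_lt ((ZMod.natCast_eq_zero_iff x n).mp h) hxn)
  refine ⟨key c (by omega) (by omega), fun h => key (c - 1) (by omega) (by omega) ?_,
    fun h => key (c + 1) (by omega) (by omega) ?_⟩
  · rw [Nat.cast_pred (by omega), h, sub_self]
  · rw [Nat.cast_succ, h, neg_add_cancel]

lemma ZMod.two_mul_natCast_half {p : ℕ} [Fact p.Prime] (hp : p ≠ 2) :
    2 * (((p - 1) / 2 : ℕ) : ZMod p) = -1 := by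
  have hodd := (Nat.Prime.mod_two_eq_one_iff_ne_two Fact.out).mpr hp
  have h := congrArg (Nat.cast : ℕ → ZMod p) (show 2 * ((p - 1) / 2) + 1 = p by omega)
  push_cast [ZMod.natCast_self] at h
  linear_combination h

section Circuit

variable {p : ℕ} [Fact p.Prime]

lemma Sfun_of_lt {i : ℕ} (hi : i + 2 ≤ (p - 1) / 2) :
    Sfun p i = fvq p 1 (((p - 1) / 2 - i : ℕ)) :=
  if_pos hi

lemma Sfun_of_ge {i : ℕ} (hi : (p - 1) / 2 - 2 ≤ i) :
    Sfun p i = fvq p ((i - ((p - 1) / 2 - 2) + 1 : ℕ)) ((i - ((p - 1) / 2 - 2) + 2 : ℕ)) := by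
  unfold Sfun
  split_ifs with h
  · rw [show (p - 1) / 2 - i = 2 by omega, show i - ((p - 1) / 2 - 2) = 0 by omega]
    norm_num
  · rfl

lemma Sfun_adj_succ (i : ℕ) : (FGraph p).Adj (Sfun p i) (Sfun p (i + 1)) := by
  by_cases hi : i + 3 ≤ (p - 1) / 2
  · rw [Sfun_of_lt (by omega), Sfun_of_lt hi,
      show (p - 1) / 2 - i = (p - 1) / 2 - (i + 1) + 1 by omega]
    exact FGraph.adj_fvq (Or.inr (by push_cast; ring))
  · rw [Sfun_of_ge (by omega), Sfun_of_ge (by omega),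
      show i + 1 - ((p - 1) / 2 - 2) = i - ((p - 1) / 2 - 2) + 1 by omega]
    exact FGraph.adj_fvq (Or.inr (by push_cast; ring))

lemma Sfun_eq_fvq_natCast {i : ℕ} (hi : i < p - 4) :
    ∃ (a : ZMod p) (c : ℕ), 2 ≤ c ∧ c + 2 ≤ p ∧ Sfun p i = fvq p a c := by
  by_cases h : i + 2 ≤ (p - 1) / 2
  · exact ⟨1, _, by omega, by omega, Sfun_of_lt h⟩
  · exact ⟨_, _, by omega, by omega, Sfun_of_ge (by omega)⟩

lemma trv_Sfun_adj_trv_add_one_Sfun_zero (hp : 5 ≤ p) (k : ZMod p) :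
    (FGraph p).Adj (trv k (Sfun p (p - 5))) (trv (k + 1) (Sfun p 0)) := by
  have hodd := (Nat.Prime.mod_two_eq_one_iff_ne_two Fact.out).mpr (show p ≠ 2 by omega)
  have hm := ZMod.two_mul_natCast_half (show p ≠ 2 by omega)
  set m : ZMod p := (((p - 1) / 2 : ℕ) : ZMod p)
  have hm0 : m ≠ 0 := fun h => by simp [h] at hm
  have hfirst : Sfun p 0 = fvq p 1 m := Sfun_of_lt (by omega)
  have hlast : Sfun p (p - 5) = fvq p (m - 1) m := by
    rw [Sfun_of_ge (by omega), show p - 5 - ((p - 1) / 2 - 2) + 2 = (p - 1) / 2 by omega,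
      show p - 5 - ((p - 1) / 2 - 2) + 1 = (p - 1) / 2 - 1 by omega, Nat.cast_pred (by omega)]
  rw [hfirst, hlast, trv_fvq k hm0, trv_fvq (k + 1) hm0]
  exact FGraph.adj_fvq (Or.inl (by linear_combination -hm))

lemma S2fun_eq (j : ℕ) :
    S2fun p j = trv ((j / (p - 4) : ℕ) : ZMod p) (Sfun p (j % (p - 4))) := by
  rw [S2fun, Nat.mod_mul_left_div_self, Nat.mod_mul_left_mod, ZMod.natCast_mod]

lemma S2fun_adj_succ (hp : 5 ≤ p) (j : ℕ) : (FGraph p).Adj (S2fun p j) (S2fun p (j + 1)) := by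
  have hn : 0 < p - 4 := by omega
  obtain ⟨q, r, hr, rfl⟩ : ∃ q r, r < p - 4 ∧ j = (p - 4) * q + r :=
    ⟨_, _, Nat.mod_lt j hn, (Nat.div_add_mod j _).symm⟩
  rw [S2fun_eq, S2fun_eq, add_assoc]
  simp only [Nat.mul_add_div hn, Nat.mul_add_mod, Nat.div_eq_of_lt hr, Nat.mod_eq_of_lt hr,
    add_zero]
  obtain hr' | hr' : r + 1 < p - 4 ∨ r + 1 = p - 4 := by omega
  · rw [Nat.div_eq_of_lt hr', Nat.mod_eq_of_lt hr', add_zero]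
    exact FGraph.adj_trv _ (Sfun_adj_succ r)
  · rw [hr', Nat.div_self hn, Nat.mod_self, show r = p - 5 by omega, Nat.cast_succ]
    exact trv_Sfun_adj_trv_add_one_Sfun_zero hp _

end Circuit

/-- For prime `p ≥ 5`, the concatenation `S₂(p) = S (S+1) ⋯ (S+p-1)` is a closed circuit in
`M₃(p)` of length `p(p-4)`, all of whose vertices lie at graph distance 2 from `[1:0]`. -/
theorem S2_circuit (p : ℕ) [Fact p.Prime] (hp : 5 ≤ p) :
    Function.Periodic (S2fun p) (p * (p - 4)) ∧
    (∀ j : ℕ, (FGraph p).Adj (S2fun p j) (S2fun p (j + 1))) ∧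
    (∀ j : ℕ, (FGraph p).dist (fvq p 1 0) (S2fun p j) = 2) := by
  refine ⟨fun j => by simp only [S2fun, Nat.add_mod_right], S2fun_adj_succ hp, fun j => ?_⟩
  obtain ⟨a, c, hc2, hcp, hS⟩ := Sfun_eq_fvq_natCast (Nat.mod_lt j (show 0 < p - 4 by omega))
  obtain ⟨h0, h1, h2⟩ := ZMod.natCast_ne_zero_one_neg_one hc2 hcp
  rw [S2fun_eq, hS, trv_fvq _ h0]
  exact FGraph.dist_fvq_one_zero h0 h1 h2
end
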